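/- arXiv:1904.00729 — 2 statements merged into one kernel-verified Lean document; each statement's English description precedes it below -/
import Mathlib

section
/- Let G = ⟨γ, δ | [δγδ⁻¹, γ] = 1, (δ⁻¹γδ)(δγδ⁻¹) = γ³⟩. Every character ξ : G → ℂ* satisfies ξ(γ) = 1. For a nontrivial character ξ, set t = ξ(δ) (so t ≠ 1); then dim_ℂ H¹(G; ℂ_ξ) = 1 if t² − 3t + 1 = 0, and dim_ℂ H¹(G; ℂ_ξ) = 0 otherwise. In particular the nontrivial part of the first characteristic variety of G consists exactly of the two (non-torsion) characters with ξ(δ) a root of t² − 3t + 1. -/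
/-- the one-dimensional representation `ℂ_ξ` attached to a character `ξ : G → ℂ*` -/
noncomputable def charRep {G : Type} [Group G] (ξ : G →* ℂˣ) : Rep ℂ G :=
  Rep.of
    { toFun := fun g => (ξ g : ℂ) • (LinearMap.id : ℂ →ₗ[ℂ] ℂ)
      map_one' := by simp [Module.End.one_eq_id]
      map_mul' := fun g h => by
        ext
        simp [mul_smul, Module.End.mul_apply, mul_comm] }

/-- `dim_ℂ H¹(G; ℂ_ξ)` -/
noncomputable def h1dim {G : Type} [Group G] (ξ : G →* ℂˣ) : ℕ :=
  Module.finrank ℂ (groupCohomology (charRep ξ) 1)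

/-- the two generators `γ, δ` -/
inductive GenGD : Type
  | g | d

open scoped commutatorElement in
open GenGD in
/-- the relators `[δγδ⁻¹, γ], (δ⁻¹γδ)(δγδ⁻¹)(γ³)⁻¹` -/
def relsGD : Set (FreeGroup GenGD) :=
  { ⁅FreeGroup.of d * FreeGroup.of g * (FreeGroup.of d)⁻¹, FreeGroup.of g⁆,
    ((FreeGroup.of d)⁻¹ * FreeGroup.of g * FreeGroup.of d) *
      (FreeGroup.of d * FreeGroup.of g * (FreeGroup.of d)⁻¹) *
        (FreeGroup.of g ^ 3)⁻¹ }

/-!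
A 1-cocycle `f` of `ℂ_ξ` is the same thing as a homomorphism `x ↦ (z ↦ ξ(x) z + f(x))` from `G`
to the affine group of `ℂ` lifting `ξ`. Every character kills `γ`, so such a homomorphism sends
`γ` to the translation by `a = f(γ)` and `δ` to some `z ↦ t z + b`; the first relation then holds
automatically, and the second says exactly `a (t² - 3t + 1) = 0`. Coboundaries vanish at `γ`, and
conversely a cocycle with `f(γ) = 0` is the coboundary of `f(δ) / (t - 1)`. Hence `f ↦ f(γ)`
identifies `H¹(G; ℂ_ξ)` with `ℂ` when `t² - 3t + 1 = 0` and with `0` otherwise.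
-/

universe u

open groupCohomology
open scoped commutatorElement

lemma PresentedGroup.lift_eq_one_of_mem {α H : Type*} [Group H] {rels : Set (FreeGroup α)}
    (φ : PresentedGroup rels →* H) {r : FreeGroup α} (hr : r ∈ rels) :
    FreeGroup.lift (fun i => φ (.of i)) r = 1 := by
  have : FreeGroup.lift (fun i => φ (.of i)) = φ.comp (PresentedGroup.mk rels) :=
    FreeGroup.ext_hom _ _ fun i => by simp [PresentedGroup.of]
  rw [this, MonoidHom.comp_apply, PresentedGroup.one_of_mem hr, map_one]

lemma finrank_H1_eq_finrank_range {k G : Type u} {M : Type*} [CommRing k] [Group G] {A : Rep k G}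
    [AddCommGroup M] [Module k M] (L : cocycles₁ A →ₗ[k] M)
    (hL : ∀ f, L f = 0 ↔ ⇑f ∈ coboundaries₁ A) :
    Module.finrank k (H1 A) = Module.finrank k (LinearMap.range L) := by
  have hsurj : Function.Surjective (H1π A).hom :=
    (ModuleCat.epi_iff_surjective _).1 inferInstance
  have hker : LinearMap.ker (H1π A).hom = LinearMap.ker L := by
    ext f
    simp only [LinearMap.mem_ker, hL]
    exact H1π_eq_zero_iff f
  exact ((LinearMap.quotKerEquivOfSurjective _ hsurj).symm.trans
    ((Submodule.quotEquivOfEq _ _ hker).trans L.quotKerEquivRange)).finrank_eq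

/-- `⟨u, v⟩` is the affine map `z ↦ u * z + v`; multiplication is composition. -/
@[ext]
structure Aff (R : Type*) [CommRing R] where
  u : Rˣ
  v : R

namespace Aff

variable {R : Type*} [CommRing R]

instance : Mul (Aff R) := ⟨fun p q => ⟨p.u * q.u, p.v + p.u * q.v⟩⟩
instance : One (Aff R) := ⟨⟨1, 0⟩⟩
instance : Inv (Aff R) := ⟨fun p => ⟨p.u⁻¹, -(↑p.u⁻¹ * p.v)⟩⟩

@[simp] lemma mul_u (p q : Aff R) : (p * q).u = p.u * q.u := rfl
@[simp] lemma mul_v (p q : Aff R) : (p * q).v = p.v + p.u * q.v := rfl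
@[simp] lemma one_u : (1 : Aff R).u = 1 := rfl
@[simp] lemma one_v : (1 : Aff R).v = 0 := rfl
@[simp] lemma inv_u (p : Aff R) : p⁻¹.u = p.u⁻¹ := rfl
@[simp] lemma inv_v (p : Aff R) : p⁻¹.v = -(↑p.u⁻¹ * p.v) := rfl

instance : Group (Aff R) where
  mul_assoc p q r := by ext <;> simp only [mul_u, mul_v, mul_assoc, Units.val_mul]; ring
  one_mul p := by ext <;> simp
  mul_one p := by ext <;> simp
  inv_mul_cancel p := by ext <;> simp

def linearPart : Aff R →* Rˣ where
  toFun := u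
  map_one' := rfl
  map_mul' _ _ := rfl

def translation (a : R) : Aff R := ⟨1, a⟩

lemma translation_injective : Function.Injective (translation : R → Aff R) :=
  fun _ _ h => congrArg v h

lemma translation_eq_one_iff {a : R} : translation a = 1 ↔ a = 0 :=
  ⟨fun h => congrArg v h, fun h => by ext <;> simp [translation, h]⟩

lemma translation_mul_translation (a b : R) :
    translation a * translation b = translation (a + b) := by
  ext <;> simp [translation]

lemma translation_inv (a : R) : (translation a)⁻¹ = translation (-a) := by
  ext <;> simp [translation]

lemma translation_pow (a : R) (n : ℕ) : translation a ^ n = translation (n * a) := by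
  induction n with
  | zero => ext <;> simp [translation]
  | succ n ih => rw [pow_succ, ih, translation_mul_translation]; push_cast; ring_nf

lemma mul_translation_mul_inv (p : Aff R) (a : R) :
    p * translation a * p⁻¹ = translation (p.u * a) := by
  ext <;> simp [translation]

lemma inv_mul_translation_mul (p : Aff R) (a : R) :
    p⁻¹ * translation a * p = translation (↑p.u⁻¹ * a) := by
  simpa using mul_translation_mul_inv p⁻¹ a

end Aff

section CharacterCocycles

variable {G : Type} [Group G] (ξ : G →* ℂˣ)

lemma charRep_ρ_apply (x : G) (c : ℂ) : (charRep ξ).ρ x c = (ξ x : ℂ) * c := rfl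

/-- `f ↦ f x`, valued in `ℂ`: the carrier of `charRep ξ` is `ℂ` only up to unfolding, so
arithmetic on `f x` itself does not elaborate. -/
noncomputable def cocycleEval (x : G) : cocycles₁ (charRep ξ) →ₗ[ℂ] ℂ where
  toFun f := f x
  map_add' _ _ := rfl
  map_smul' _ _ := rfl

lemma cocycleEval_d₀₁ (c : ℂ) (x : G) :
    cocycleEval ξ x ⟨_, d₀₁_apply_mem_cocycles₁ c⟩ = ((ξ x : ℂ) - 1) * c := by
  show (ξ x : ℂ) * c - c = _
  ring

lemma cocycleEval_eq_zero_of_mem_coboundaries₁ {x : G} (hx : ξ x = 1)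
    {f : cocycles₁ (charRep ξ)} (hf : ⇑f ∈ coboundaries₁ (charRep ξ)) :
    cocycleEval ξ x f = 0 := by
  obtain ⟨c, hc⟩ := hf
  show (f : G → charRep ξ) x = 0
  rw [← hc, d₀₁_hom_apply, sub_eq_zero]
  exact (charRep_ρ_apply ξ x c).trans (by rw [hx, Units.val_one]; exact one_mul (M := ℂ) c)

noncomputable def affHomOfCocycle (f : cocycles₁ (charRep ξ)) : G →* Aff ℂ where
  toFun x := ⟨ξ x, f x⟩
  map_one' := by ext <;> simp; rfl
  map_mul' x y := by
    ext
    · simp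
    · simp only [Aff.mul_v]
      rw [(mem_cocycles₁_iff f).1 f.2 x y, add_comm]
      rfl

noncomputable def cocycleOfAffHom (φ : G →* Aff ℂ) (hφ : ∀ x, (φ x).u = ξ x) :
    cocycles₁ (charRep ξ) :=
  ⟨fun x => (φ x).v, (mem_cocycles₁_iff _).2 fun x y => by
    simp only [map_mul, Aff.mul_v, hφ]
    exact add_comm _ _⟩

end CharacterCocycles

lemma cocycles₁_charRep_ext {α : Type} {rels : Set (FreeGroup α)}
    {ξ : PresentedGroup rels →* ℂˣ} {f₁ f₂ : cocycles₁ (charRep ξ)}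
    (h : ∀ i, cocycleEval ξ (.of i) f₁ = cocycleEval ξ (.of i) f₂) : f₁ = f₂ := by
  have hφ : affHomOfCocycle ξ f₁ = affHomOfCocycle ξ f₂ :=
    PresentedGroup.ext fun i => Aff.ext rfl (h i)
  exact cocycles₁_ext fun x => congrArg Aff.v (DFunLike.congr_fun hφ x)

lemma forall_lift_relsGD_eq_one_iff {H : Type*} [Group H] (f : GenGD → H) :
    (∀ r ∈ relsGD, FreeGroup.lift f r = 1) ↔
      ⁅f .d * f .g * (f .d)⁻¹, f .g⁆ = 1 ∧
        (f .d)⁻¹ * f .g * f .d * (f .d * f .g * (f .d)⁻¹) = f .g ^ 3 := by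
  simp [relsGD, mul_inv_eq_one]

namespace Aff

variable {R : Type*} [CommRing R]

def gensGD (p : Aff R) (a : R) : GenGD → Aff R
  | .g => translation a
  | .d => p

lemma forall_lift_gensGD_relsGD_eq_one_iff (p : Aff R) (a : R) :
    (∀ r ∈ relsGD, FreeGroup.lift (gensGD p a) r = 1) ↔
      a * ((p.u : R) ^ 2 - 3 * p.u + 1) = 0 := by
  have hu : (↑p.u⁻¹ : R) * p.u = 1 := p.u.inv_mul
  simp only [forall_lift_relsGD_eq_one_iff, gensGD, commutatorElement_def,
    mul_translation_mul_inv, inv_mul_translation_mul, translation_inv,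
    translation_mul_translation, translation_pow, translation_eq_one_iff,
    translation_injective.eq_iff]
  constructor
  · rintro ⟨-, h⟩
    linear_combination (p.u : R) * h - a * hu
  · intro h
    refine ⟨by ring, ?_⟩
    linear_combination (↑p.u⁻¹ : R) * h - (p.u * a - 3 * a) * hu

end Aff

local notation "γ" => (PresentedGroup.of GenGD.g : PresentedGroup relsGD)
local notation "δ" => (PresentedGroup.of GenGD.d : PresentedGroup relsGD)

lemma map_conj_mul_conj_eq_pow_three {H : Type*} [Group H] (φ : PresentedGroup relsGD →* H) :
    (φ δ)⁻¹ * φ γ * φ δ * (φ δ * φ γ * (φ δ)⁻¹) = φ γ ^ 3 :=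
  ((forall_lift_relsGD_eq_one_iff _).1 fun _ hr => PresentedGroup.lift_eq_one_of_mem φ hr).2

lemma map_of_g_eq_one {M : Type*} [CommGroup M] (ξ : PresentedGroup relsGD →* M) : ξ γ = 1 := by
  have h := map_conj_mul_conj_eq_pow_three ξ
  rw [mul_inv_cancel_comm, mul_comm (ξ δ)⁻¹, inv_mul_cancel_right, ← pow_two,
    pow_succ (ξ γ) 2] at h
  exact left_eq_mul.1 h

lemma map_of_d_ne_one {M : Type*} [CommGroup M] {ξ : PresentedGroup relsGD →* M} (hξ : ξ ≠ 1) :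
    ξ δ ≠ 1 := by
  refine fun hδ => hξ (PresentedGroup.ext fun i => ?_)
  cases i
  · exact map_of_g_eq_one ξ
  · exact hδ

section Cocycles

variable (ξ : PresentedGroup relsGD →* ℂˣ)

lemma cocycleEval_g_mul_eq_zero (f : cocycles₁ (charRep ξ)) :
    cocycleEval ξ γ f * ((ξ δ : ℂ) ^ 2 - 3 * ξ δ + 1) = 0 := by
  have hgens : (fun i => affHomOfCocycle ξ f (.of i)) =
      Aff.gensGD (affHomOfCocycle ξ f δ) (cocycleEval ξ γ f) := by
    funext i
    cases i
    · exact Aff.ext (map_of_g_eq_one ξ) rfl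
    · rfl
  refine (Aff.forall_lift_gensGD_relsGD_eq_one_iff (affHomOfCocycle ξ f δ) _).1 ?_
  rw [← hgens]
  exact fun _ hr => PresentedGroup.lift_eq_one_of_mem _ hr

lemma exists_cocycleEval_g_eq (a : ℂ) (ha : a * ((ξ δ : ℂ) ^ 2 - 3 * ξ δ + 1) = 0) :
    ∃ f : cocycles₁ (charRep ξ), cocycleEval ξ γ f = a := by
  have hrels := (Aff.forall_lift_gensGD_relsGD_eq_one_iff ⟨ξ δ, 0⟩ a).2 ha
  let φ := PresentedGroup.toGroup hrels
  have hφ : Aff.linearPart.comp φ = ξ := by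
    refine PresentedGroup.ext fun i => ?_
    cases i
    · simp [φ, Aff.linearPart, Aff.gensGD, Aff.translation, map_of_g_eq_one ξ]
    · simp [φ, Aff.linearPart, Aff.gensGD]
  refine ⟨cocycleOfAffHom ξ φ fun x => DFunLike.congr_fun hφ x, ?_⟩
  show (φ γ).v = a
  rw [PresentedGroup.toGroup.of]
  rfl

lemma cocycleEval_g_eq_zero_iff (hδ : (ξ δ : ℂ) ≠ 1) (f : cocycles₁ (charRep ξ)) :
    cocycleEval ξ γ f = 0 ↔ ⇑f ∈ coboundaries₁ (charRep ξ) := by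
  refine ⟨fun hf => ?_, cocycleEval_eq_zero_of_mem_coboundaries₁ ξ (map_of_g_eq_one ξ)⟩
  let c : ℂ := cocycleEval ξ δ f / (ξ δ - 1)
  have hfc : f = ⟨_, d₀₁_apply_mem_cocycles₁ c⟩ := by
    refine cocycles₁_charRep_ext fun i => ?_
    cases i
    · rw [hf, cocycleEval_d₀₁, map_of_g_eq_one, Units.val_one, sub_self, zero_mul]
    · rw [cocycleEval_d₀₁, mul_div_cancel₀ _ (sub_ne_zero.2 hδ)]
  exact ⟨c, congrArg Subtype.val hfc.symm⟩

end Cocycles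

/-- For `G = ⟨γ, δ ∣ [δγδ⁻¹, γ] = 1, (δ⁻¹γδ)(δγδ⁻¹) = γ³⟩`: every character of
`G` kills `γ`, and for a nontrivial character `ξ` with `t = ξ(δ)` one has
`t ≠ 1`, and `dim_ℂ H¹(G; ℂ_ξ)` is `1` if `t² − 3t + 1 = 0` and `0` otherwise.
In particular the nontrivial part of `Char₁(G)` consists exactly of the two
(non-torsion) characters with `ξ(δ)` a root of `t² − 3t + 1`. -/
theorem char_var_torus_bundle :
    (∀ ξ : PresentedGroup relsGD →* ℂˣ,
      ξ (PresentedGroup.of GenGD.g) = 1) ∧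
    ∀ ξ : PresentedGroup relsGD →* ℂˣ, (∃ x, ξ x ≠ 1) →
      ∀ t : ℂ, t = (ξ (PresentedGroup.of GenGD.d) : ℂ) →
        t ≠ 1 ∧
        (t ^ 2 - 3 * t + 1 = 0 → h1dim ξ = 1) ∧
        (t ^ 2 - 3 * t + 1 ≠ 0 → h1dim ξ = 0) := by
  refine ⟨map_of_g_eq_one, fun ξ hξ t ht => ?_⟩
  subst ht
  have hξ1 : ξ ≠ 1 := by
    rintro rfl
    obtain ⟨x, hx⟩ := hξ
    exact hx rfl
  have hδ : (ξ δ : ℂ) ≠ 1 := Units.val_eq_one.not.2 (map_of_d_ne_one hξ1)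
  have hH1 := finrank_H1_eq_finrank_range (cocycleEval ξ γ) (cocycleEval_g_eq_zero_iff ξ hδ)
  refine ⟨hδ, fun hroot => ?_, fun hroot => ?_⟩
  · have hsurj : LinearMap.range (cocycleEval ξ γ) = ⊤ := LinearMap.range_eq_top.2 fun a =>
      exists_cocycleEval_g_eq ξ a (by rw [hroot, mul_zero])
    rw [h1dim, hH1, hsurj, finrank_top, Module.finrank_self]
  · have hzero : cocycleEval ξ γ = 0 := LinearMap.ext fun f =>
      (mul_eq_zero.1 (cocycleEval_g_mul_eq_zero ξ f)).resolve_right hroot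
    rw [h1dim, hH1, hzero, LinearMap.range_zero, finrank_bot]
end

section
/- Let G = ⟨a, b | [a², b²] = 1⟩. For every nontrivial character ξ : G → ℂ*, writing s = ξ(a) and t = ξ(b), one has dim_ℂ H¹(G; ℂ_ξ) = 1 if s = −1 or t = −1, and dim_ℂ H¹(G; ℂ_ξ) = 0 otherwise. -/
/-- the two generators `a, b` -/
inductive GenTwo : Type
  | a | b

open scoped commutatorElement in
/-- the single relator `[a², b²]` -/
def relsTwo : Set (FreeGroup GenTwo) :=
  { ⁅FreeGroup.of GenTwo.a ^ 2, FreeGroup.of GenTwo.b ^ 2⁆ }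

/-!
A 1-cocycle `f` of `G` with values in `ℂ_ξ` is the same thing as a lift `g ↦ (f g, ξ g)` of `ξ`
to the affine group `ℂ ⋊ ℂˣ`. As `G` is presented, such lifts correspond to the images
`(x, s), (y, t)` of `a, b` whose squares commute, and in the affine group this is the linear
condition `(1 + s)(1 - t²) x + (1 + t)(s² - 1) y = 0` given by the Fox derivatives of the relator.
Hence `Z¹ ≅ ker ℓ ⊆ ℂ²` for this form `ℓ`, which vanishes exactly when `s = -1` or `t = -1` (the
case `s = t = 1` is excluded by nontriviality), while `B¹ ≅ ℂ` since `ξ` is nontrivial; so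
`dim H¹ = dim ker ℓ - 1`.
-/

open Module groupCohomology

section FoxForm

variable {R : Type*} [CommRing R]

/-- The Fox derivatives of `[a², b²]`, evaluated at `a ↦ s`, `b ↦ t`. -/
def foxForm (s t : R) : R × R →ₗ[R] R :=
  ((1 + s) * (1 - t ^ 2)) • LinearMap.fst R R R + ((1 + t) * (s ^ 2 - 1)) • LinearMap.snd R R R

@[simp]
lemma foxForm_apply (s t : R) (v : R × R) :
    foxForm s t v = (1 + s) * (1 - t ^ 2) * v.1 + (1 + t) * (s ^ 2 - 1) * v.2 := rfl

lemma foxForm_eq_zero_iff [IsDomain R] (s t : R) :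
    foxForm s t = 0 ↔ s = -1 ∨ t = -1 ∨ (s = 1 ∧ t = 1) := by
  constructor
  · intro h
    have ha := LinearMap.congr_fun h (1, 0)
    have hb := LinearMap.congr_fun h (0, 1)
    simp only [foxForm_apply, mul_one, mul_zero, add_zero, zero_add, LinearMap.zero_apply] at ha hb
    by_cases hs : s = -1
    · exact .inl hs
    by_cases ht : t = -1
    · exact .inr (.inl ht)
    have hs' : 1 + s ≠ 0 := fun h => hs (by linear_combination h)
    have ht' : 1 + t ≠ 0 := fun h => ht (by linear_combination h)
    have ht1 : (1 + s) * (1 + t) * (1 - t) = 0 := by linear_combination ha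
    have hs1 : (1 + t) * (1 + s) * (s - 1) = 0 := by linear_combination hb
    simp only [mul_eq_zero, hs', ht', false_or, sub_eq_zero] at ht1 hs1
    exact .inr (.inr ⟨hs1, ht1.symm⟩)
  · rintro (rfl | rfl | ⟨rfl, rfl⟩) <;> ext <;> simp

end FoxForm

/-- The affine group of `R`: `⟨b, u⟩` acts on `R` by `z ↦ b + u * z`. -/
@[ext]
structure Aff_s13 (R : Type*) [CommRing R] where
  shift : R
  scale : Rˣ

namespace Aff_s13

variable {R : Type*} [CommRing R]

instance inst_s13 : Mul (Aff_s13 R) := ⟨fun p q => ⟨p.shift + p.scale * q.shift, p.scale * q.scale⟩⟩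
instance inst_s13_2 : One (Aff_s13 R) := ⟨⟨0, 1⟩⟩
instance inst_s13_3 : Inv (Aff_s13 R) := ⟨fun p => ⟨-(↑p.scale⁻¹ * p.shift), p.scale⁻¹⟩⟩

@[simp] lemma mul_shift (p q : Aff_s13 R) : (p * q).shift = p.shift + p.scale * q.shift := rfl
@[simp] lemma mul_scale (p q : Aff_s13 R) : (p * q).scale = p.scale * q.scale := rfl
@[simp] lemma one_shift : (1 : Aff_s13 R).shift = 0 := rfl
@[simp] lemma one_scale : (1 : Aff_s13 R).scale = 1 := rfl
@[simp] lemma inv_shift (p : Aff_s13 R) : p⁻¹.shift = -(↑p.scale⁻¹ * p.shift) := rfl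
@[simp] lemma inv_scale (p : Aff_s13 R) : p⁻¹.scale = p.scale⁻¹ := rfl

instance inst_s13_4 : Group (Aff_s13 R) where
  mul_assoc p q r := by ext <;> simp <;> ring
  one_mul p := by ext <;> simp
  mul_one p := by ext <;> simp
  inv_mul_cancel p := by ext <;> simp

lemma commute_sq_sq_iff (p q : Aff_s13 R) :
    Commute (p ^ 2) (q ^ 2) ↔ foxForm (p.scale : R) q.scale (p.shift, q.shift) = 0 := by
  rw [Commute, SemiconjBy, Aff_s13.ext_iff, ← sub_eq_zero]
  simp only [sq, mul_shift, mul_scale, foxForm_apply, Units.val_mul]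
  constructor
  · rintro ⟨h, -⟩
    linear_combination h
  · intro h
    exact ⟨by linear_combination h, mul_comm _ _⟩

def scaleHom : Aff_s13 R →* Rˣ where
  toFun := scale
  map_one' := rfl
  map_mul' _ _ := rfl

@[simp] lemma scaleHom_apply (p : Aff_s13 R) : scaleHom p = p.scale := rfl

end Aff_s13

namespace groupCohomology

section

universe u
variable {k G : Type u} [Group G]

lemma cocycles₁_ext_of_closure_eq_top [CommRing k] {A : Rep k G} {S : Set G}
    (hS : Subgroup.closure S = ⊤) {f₁ f₂ : cocycles₁ A} (h : ∀ g ∈ S, f₁ g = f₂ g) :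
    f₁ = f₂ := by
  ext g
  have hg : g ∈ Subgroup.closure S := hS ▸ Subgroup.mem_top g
  induction hg using Subgroup.closure_induction with
  | mem x hx => exact h x hx
  | one => simp
  | mul x y _ _ hx hy =>
    rw [(mem_cocycles₁_iff (f₁ : G → A)).1 f₁.2, (mem_cocycles₁_iff (f₂ : G → A)).1 f₂.2,
      hx, hy]
  | inv x _ hx =>
    rw [← neg_inj, ← cocycles₁_map_inv f₁ x⁻¹, ← cocycles₁_map_inv f₂ x⁻¹, inv_inv, hx]

lemma finrank_H1_add_finrank_coboundaries₁ [Field k] (A : Rep k G)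
    [FiniteDimensional k (cocycles₁ A)] :
    finrank k (H1 A) + finrank k (coboundaries₁ A) = finrank k (cocycles₁ A) := by
  have hsurj : Function.Surjective (H1π A).hom :=
    (ModuleCat.epi_iff_surjective _).1 inferInstance
  have hker : LinearMap.ker (H1π A).hom = (coboundaries₁ A).comap (cocycles₁ A).subtype := by
    ext x
    exact H1π_eq_zero_iff x
  have := LinearMap.finrank_range_add_finrank_ker (H1π A).hom
  rwa [LinearMap.range_eq_top.2 hsurj, finrank_top, hker,
    (Submodule.comapSubtypeEquivOfLe (coboundaries₁_le_cocycles₁ A)).finrank_eq] at this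

end

section CharRep

variable {G : Type} [Group G] (ξ : G →* ℂˣ)

lemma mem_cocycles₁_charRep_iff (f : G → ℂ) :
    f ∈ cocycles₁ (charRep ξ) ↔ ∀ g h, f (g * h) = ξ g * f h + f g :=
  mem_cocycles₁_iff (A := charRep ξ) f

@[simps]
noncomputable def cocycles₁.toAffHom (f : cocycles₁ (charRep ξ)) : G →* Aff_s13 ℂ where
  toFun g := ⟨f g, ξ g⟩
  map_one' := Aff_s13.ext (cocycles₁_map_one f) (by simp)
  map_mul' g h := by
    ext
    · exact ((mem_cocycles₁_charRep_iff ξ f).1 f.2 g h).trans (add_comm _ _)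
    · simp

lemma shift_mem_cocycles₁ (φ : G →* Aff_s13 ℂ) (hφ : Aff_s13.scaleHom.comp φ = ξ) :
    (fun g => (φ g).shift) ∈ cocycles₁ (charRep ξ) :=
  (mem_cocycles₁_charRep_iff ξ _).2 fun g h => by
    rw [map_mul, Aff_s13.mul_shift, ← hφ, add_comm]
    rfl

lemma finrank_coboundaries₁_charRep {ξ : G →* ℂˣ} (hξ : ξ ≠ 1) :
    finrank ℂ (coboundaries₁ (charRep ξ)) = 1 := by
  obtain ⟨g, hg⟩ := DFunLike.ne_iff.1 hξ
  have hg' : (ξ g : ℂ) - 1 ≠ 0 := sub_ne_zero.2 (Units.val_eq_one.not.2 hg)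
  have hinj : Function.Injective (d₀₁ (charRep ξ)).hom := fun (v w : ℂ) hvw => by
    have h : (ξ g : ℂ) * v - v = (ξ g : ℂ) * w - w := congr_fun hvw g
    show v = w
    exact mul_left_cancel₀ hg' (by linear_combination h)
  rw [coboundaries₁, LinearMap.finrank_range_of_inj hinj]
  exact finrank_self ℂ

end CharRep

end groupCohomology

section RelsTwo

lemma commute_sq_of_relsTwo {H : Type*} [Group H] (φ : PresentedGroup relsTwo →* H) :
    Commute (φ (.of .a) ^ 2) (φ (.of .b) ^ 2) := by
  have h := congrArg φ (PresentedGroup.one_of_mem (rels := relsTwo) rfl)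
  rw [map_one, map_commutatorElement, map_commutatorElement, map_pow, map_pow, map_pow,
    map_pow] at h
  exact commutatorElement_eq_one_iff_commute.1 h

lemma exists_hom_of_commute_sq {H : Type*} [Group H] {x y : H} (h : Commute (x ^ 2) (y ^ 2)) :
    ∃ φ : PresentedGroup relsTwo →* H, φ (.of .a) = x ∧ φ (.of .b) = y := by
  let f : GenTwo → H := fun | .a => x | .b => y
  have hf : ∀ r ∈ relsTwo, FreeGroup.lift f r = 1 := by
    rintro _ rfl
    simpa [map_commutatorElement, commutatorElement_eq_one_iff_commute] using h
  exact ⟨PresentedGroup.toGroup hf, PresentedGroup.toGroup.of hf, PresentedGroup.toGroup.of hf⟩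

variable (ξ : PresentedGroup relsTwo →* ℂˣ)

@[simps]
noncomputable def evalGens : cocycles₁ (charRep ξ) →ₗ[ℂ] ℂ × ℂ where
  toFun f := (f (.of .a), f (.of .b))
  map_add' _ _ := rfl
  map_smul' _ _ := rfl

lemma evalGens_injective : Function.Injective (evalGens ξ) := by
  intro f₁ f₂ h
  refine cocycles₁_ext_of_closure_eq_top (PresentedGroup.closure_range_of relsTwo) ?_
  rintro _ ⟨_ | _, rfl⟩
  exacts [congrArg Prod.fst h, congrArg Prod.snd h]

lemma range_evalGens :
    LinearMap.range (evalGens ξ) = LinearMap.ker (foxForm (ξ (.of .a) : ℂ) (ξ (.of .b))) := by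
  ext v
  constructor
  · rintro ⟨f, rfl⟩
    have h := (Aff_s13.commute_sq_sq_iff _ _).1 (commute_sq_of_relsTwo (cocycles₁.toAffHom ξ f))
    simp only [cocycles₁.toAffHom_apply_shift, cocycles₁.toAffHom_apply_scale] at h
    simpa only [LinearMap.mem_ker, evalGens_apply] using h
  · obtain ⟨x, y⟩ := v
    intro h
    obtain ⟨φ, ha, hb⟩ := exists_hom_of_commute_sq
      ((Aff_s13.commute_sq_sq_iff ⟨x, ξ (.of .a)⟩ ⟨y, ξ (.of .b)⟩).2 h)
    have hφ : Aff_s13.scaleHom.comp φ = ξ := by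
      ext (_ | _) <;> simp [ha, hb]
    exact ⟨⟨_, shift_mem_cocycles₁ ξ φ hφ⟩,
      Prod.ext (congrArg Aff_s13.shift ha) (congrArg Aff_s13.shift hb)⟩

instance : FiniteDimensional ℂ (cocycles₁ (charRep ξ)) :=
  FiniteDimensional.of_injective (evalGens ξ) (evalGens_injective ξ)

lemma h1dim_add_one (hξ : ξ ≠ 1) :
    h1dim ξ + 1 = finrank ℂ (LinearMap.ker (foxForm (ξ (.of .a) : ℂ) (ξ (.of .b)))) := by
  rw [← range_evalGens, LinearMap.finrank_range_of_inj (evalGens_injective ξ),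
    ← finrank_H1_add_finrank_coboundaries₁, finrank_coboundaries₁_charRep hξ]
  rfl

end RelsTwo

/-- For `G = ⟨a, b ∣ [a², b²] = 1⟩` and a nontrivial character `ξ`, writing
`s = ξ(a)` and `t = ξ(b)`, one has `dim_ℂ H¹(G; ℂ_ξ) = 1` if `s = −1` or
`t = −1`, and `dim_ℂ H¹(G; ℂ_ξ) = 0` otherwise. -/
theorem char_var_two_gen
    (ξ : PresentedGroup relsTwo →* ℂˣ) (hξ : ∃ x, ξ x ≠ 1) :
    ∀ s t : ℂ, s = (ξ (PresentedGroup.of GenTwo.a) : ℂ) →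
      t = (ξ (PresentedGroup.of GenTwo.b) : ℂ) →
      ((s = -1 ∨ t = -1) → h1dim ξ = 1) ∧
      (¬ (s = -1 ∨ t = -1) → h1dim ξ = 0) := by
  rintro s t rfl rfl
  have hξ₁ : ξ ≠ 1 := by
    rintro rfl
    exact hξ.elim fun _ hx => hx rfl
  have hdim := h1dim_add_one ξ hξ₁
  have hnot_one : ¬ ((ξ (.of .a) : ℂ) = 1 ∧ (ξ (.of .b) : ℂ) = 1) := by
    rintro ⟨ha, hb⟩
    refine hξ₁ (PresentedGroup.ext ?_)
    rintro (_ | _)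
    exacts [Units.val_eq_one.1 ha, Units.val_eq_one.1 hb]
  constructor
  · intro h
    rw [(foxForm_eq_zero_iff _ _).2 (h.elim .inl (.inr ∘ .inl)), LinearMap.ker_zero, finrank_top,
      finrank_prod, finrank_self] at hdim
    omega
  · intro h
    have hℓ : foxForm (ξ (.of .a) : ℂ) (ξ (.of .b)) ≠ 0 := by
      rw [Ne, foxForm_eq_zero_iff]
      tauto
    have := Module.Dual.finrank_ker_add_one_of_ne_zero hℓ
    rw [finrank_prod, finrank_self] at this
    omega
end
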